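/- arXiv:1304.0719 — 2 statements merged into one kernel-verified Lean document; each statement's English description precedes it below -/
import Mathlib

section
/- In any Dallajascar (φ, H, r) on S, for all x, y, z : S, if x ⊐ z and y ∫ z, then x ⊐ y or y ∫ x. -/
/-- A *Dallajascar* on a finite nonempty type `S`: a parent function `phi : S → Option S`,
an ordered-children function `H : S → List S`, and a root `r : S`, such that
(i) `phi r = none`; (ii) `phi x ≠ none` for `x ≠ r`; (iii) the transitive closure of the
parent relation is irreflexive; (iv) `H x` is a duplicate-free list whose members are
exactly the `y` with `phi y = some x`. -/
structure Dallajascar (S : Type*) [Fintype S] [Nonempty S] where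
  phi : S → Option S
  H : S → List S
  r : S
  phi_root : phi r = none
  phi_ne_none : ∀ x : S, x ≠ r → phi x ≠ none
  acyclic : ∀ x : S, ¬ Relation.TransGen (fun y z => phi y = some z) x x
  H_nodup : ∀ x : S, (H x).Nodup
  mem_H : ∀ x y : S, y ∈ H x ↔ phi y = some x

namespace Dallajascar

variable {S : Type*} [Fintype S] [Nonempty S]

/-- The parent relation: `P D y x` iff `x` is the parent of `y`. -/
def P (D : Dallajascar S) (y x : S) : Prop := D.phi y = some x

/-- `Nest D x y` : « x emboîte y », i.e. `x` is a strict ancestor of `y`. -/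
def Nest (D : Dallajascar S) (x y : S) : Prop := Relation.TransGen D.P y x

/-- `Prec D x y` : « x précède y » : there are ancestors-or-selves `x'` of `x` and `y'`
of `y` with a common parent `a`, `x'` occurring strictly before `y'` in `H a`. -/
def Prec (D : Dallajascar S) (x y : S) : Prop :=
  ∃ a x' y' : S, Relation.ReflTransGen D.P x x' ∧ Relation.ReflTransGen D.P y y' ∧
    D.phi x' = some a ∧ D.phi y' = some a ∧
    ∃ i j : ℕ, i < j ∧ (D.H a)[i]? = some x' ∧ (D.H a)[j]? = some y'

lemma P_right_unique (D : Dallajascar S) : Relator.RightUnique D.P := by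
  intro a b c hb hc
  simp only [P] at hb hc
  rw [hb] at hc; exact Option.some.inj hc

/-- If `x ⊐ z` and `y ∫ z` then `x ⊐ y` or `y ∫ x`. -/
theorem prec_or_nest_of_prec_nest (D : Dallajascar S) :
    ∀ x y z : S, D.Prec x z → D.Nest y z → D.Prec x y ∨ D.Nest y x := by
  intro x y z hprec hnest
  obtain ⟨a, x', z', hxx', hzz', hx'a, hz'a, i, j, hij, hi, hj⟩ := hprec
  have hzy : Relation.ReflTransGen D.P z y := hnest.to_reflTransGen
  rcases Relation.ReflTransGen.total_of_right_unique D.P_right_unique hzy hzz' with h | h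
  · -- y ⤳ z' : same witnesses show x ⊐ y
    exact Or.inl ⟨a, x', z', hxx', h, hx'a, hz'a, i, j, hij, hi, hj⟩
  · -- z' ⤳ y
    rcases h.cases_head with heq | ⟨c, hc, hcy⟩
    · cases heq
      exact Or.inl ⟨a, x', y, hxx', Relation.ReflTransGen.refl, hx'a, hz'a, i, j, hij, hi, hj⟩
    · -- c = a since φ z' = some a
      have : c = a := D.P_right_unique hc hz'a
      subst this
      have h1 : Relation.TransGen D.P x' y := Relation.TransGen.head' hx'a hcy
      exact Or.inr (Relation.TransGen.trans_right hxx' h1)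

end Dallajascar
end

section
/- For every Dallajascar (φ, H, r) on a finite nonempty type S, the number of opening characters of M(φ,H) equals the number of elements of S: (M(φ,H)).count true = Fintype.card S, and consequently (M(φ,H)).length = 2 * Fintype.card S. -/
namespace Dallajascar

variable {S : Type*} [Fintype S] [Nonempty S]

/-- The parent relation is well-founded. -/
theorem wfP (D : Dallajascar S) : WellFounded D.P := by
  haveI : IsTrans S (Relation.TransGen D.P) := ⟨fun _ _ _ h₁ h₂ => h₁.trans h₂⟩
  haveI : IsIrrefl S (Relation.TransGen D.P) := ⟨D.acyclic⟩
  exact Subrelation.wf (r := Relation.TransGen D.P)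
    (fun {x y} h => Relation.TransGen.single h)
    (Finite.wellFounded_of_trans_of_irrefl _)

/-- `W D x` : the word over `{true (open), false (close)}` associated with the subtree
rooted at `x`, defined by well-founded recursion:
`W x = true :: (((H x).map W).flatten ++ [false])`. -/
noncomputable def W (D : Dallajascar S) : S → List Bool :=
  D.wfP.fix fun x ih =>
    true :: ((((D.H x).attach.map fun (y : {y : S // y ∈ D.H x}) =>
      ih y.1 ((D.mem_H x y.1).1 y.2)).flatten) ++ [false])

/-- `M(φ,H)` : the Jassological word of the Dallajascar. -/
noncomputable def MJword (D : Dallajascar S) : List Bool := D.W D.r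

end Dallajascar

/-!
By well-founded induction down the tree, `W x` contains one `true` and one `false` for every
element of the subtree below `x`: that subtree is `x` together with the subtrees of its
children, and these are pairwise disjoint because each element has a unique parent, so
ancestors of a common element are comparable. Every element descends from the root, so
both letters occur `card S` times in `W r`.
-/

theorem Finite.wellFounded_of_irrefl_transGen {α : Type*} [Finite α] {r : α → α → Prop}
    (h : ∀ a, ¬ Relation.TransGen r a a) : WellFounded r :=
  have : IsTrans α (Relation.TransGen r) := ⟨fun _ _ _ => Relation.TransGen.trans⟩
  have : Std.Irrefl (Relation.TransGen r) := ⟨h⟩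
  Subrelation.wf Relation.TransGen.single (Finite.wellFounded_of_trans_of_irrefl _)

namespace Dallajascar

open Relation

variable {S : Type*} [Fintype S] [Nonempty S] (D : Dallajascar S)

theorem W_eq (x : S) : D.W x = true :: (((D.H x).map D.W).flatten ++ [false]) := by
  rw [W, WellFounded.fix_eq]
  simp only [List.map_attach_eq_pmap, List.pmap_eq_map]

theorem wellFounded_swap_P : WellFounded (Function.swap D.P) :=
  Finite.wellFounded_of_irrefl_transGen fun x hx => D.acyclic x (transGen_swap.1 hx)

theorem reflTransGen_P_root (y : S) : ReflTransGen D.P y D.r := by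
  induction y using D.wellFounded_swap_P.induction with
  | _ y ih =>
    by_cases hy : y = D.r
    · exact hy ▸ ReflTransGen.refl
    · obtain ⟨z, hz⟩ := Option.ne_none_iff_exists'.1 (D.phi_ne_none y hy)
      exact ReflTransGen.head hz (ih z hz)

theorem P_unique {y a b : S} (ha : D.P y a) (hb : D.P y b) : a = b :=
  Option.some_injective _ (ha.symm.trans hb)

variable {D}

theorem reflTransGen_P_total {y a b : S} (ha : ReflTransGen D.P y a)
    (hb : ReflTransGen D.P y b) : ReflTransGen D.P a b ∨ ReflTransGen D.P b a := by
  induction ha using ReflTransGen.head_induction_on with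
  | refl => exact Or.inl hb
  | head hyz _ ih =>
    rcases ReflTransGen.cases_head hb with rfl | ⟨c, hyc, hcb⟩
    · exact Or.inr (ReflTransGen.head hyz ‹_›)
    · exact ih (D.P_unique hyc hyz ▸ hcb)

theorem eq_of_P_of_P_of_reflTransGen {a b x : S} (ha : D.P a x) (hb : D.P b x)
    (hab : ReflTransGen D.P a b) : a = b := by
  rcases ReflTransGen.cases_head hab with h | ⟨m, ham, hmb⟩
  · exact h
  · obtain rfl := D.P_unique ham ha
    exact (D.acyclic m (TransGen.tail' hmb hb)).elim

open Classical in
noncomputable def subtree (x : S) : Finset S :=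
  Finset.univ.filter fun y => ReflTransGen D.P y x

theorem mem_subtree {x y : S} : y ∈ D.subtree x ↔ ReflTransGen D.P y x := by
  simp [subtree]

variable (D)

theorem subtree_root : D.subtree D.r = Finset.univ :=
  Finset.eq_univ_of_forall fun y => mem_subtree.2 (D.reflTransGen_P_root y)

theorem subtree_eq_insert_biUnion [DecidableEq S] (x : S) :
    D.subtree x = insert x ((D.H x).toFinset.biUnion D.subtree) := by
  ext y
  simp only [mem_subtree, Finset.mem_insert, Finset.mem_biUnion, List.mem_toFinset, D.mem_H]
  constructor
  · intro h
    rcases ReflTransGen.cases_tail h with rfl | ⟨c, hyc, hcx⟩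
    · exact Or.inl rfl
    · exact Or.inr ⟨c, hcx, hyc⟩
  · rintro (rfl | ⟨c, hcx, hyc⟩)
    · exact ReflTransGen.refl
    · exact hyc.tail hcx

theorem card_subtree (x : S) :
    (D.subtree x).card = 1 + ((D.H x).map fun c => (D.subtree c).card).sum := by
  classical
  have hx : x ∉ (D.H x).toFinset.biUnion D.subtree := by
    simp only [Finset.mem_biUnion, List.mem_toFinset, D.mem_H, mem_subtree, not_exists]
    exact fun c ⟨hcx, hxc⟩ => D.acyclic x (TransGen.tail' hxc hcx)
  have hdisj : ((D.H x).toFinset : Set S).PairwiseDisjoint D.subtree := by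
    intro c₁ h₁ c₂ h₂ hne
    rw [List.coe_toFinset, Set.mem_ofPred_eq, D.mem_H] at h₁ h₂
    refine Finset.disjoint_left.2 fun y hy₁ hy₂ => hne ?_
    rcases reflTransGen_P_total (mem_subtree.1 hy₁) (mem_subtree.1 hy₂) with h | h
    · exact eq_of_P_of_P_of_reflTransGen h₁ h₂ h
    · exact (eq_of_P_of_P_of_reflTransGen h₂ h₁ h).symm
  rw [subtree_eq_insert_biUnion, Finset.card_insert_of_notMem hx, Finset.card_biUnion hdisj,
    List.sum_toFinset _ (D.H_nodup x), add_comm]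

theorem count_W (b : Bool) (x : S) : (D.W x).count b = (D.subtree x).card := by
  induction x using D.wfP.induction with
  | _ x ih =>
    have hcount : (D.W x).count b = 1 + ((D.H x).map fun c => (D.W c).count b).sum := by
      rw [W_eq, List.count_cons, List.count_append, List.count_flatten, List.map_map]
      cases b <;> simp [Function.comp_def] <;> omega
    rw [hcount, card_subtree, List.map_congr_left fun c hc => ih c ((D.mem_H x c).1 hc)]

theorem count_MJword (b : Bool) : D.MJword.count b = Fintype.card S := by
  rw [MJword, count_W, subtree_root, Finset.card_univ]

end Dallajascar

/-- The number of opening characters of `M(φ,H)` is the cardinality of `S`, and its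
length is twice that cardinality. -/
theorem mjword_count_card {S : Type*} [Fintype S] [Nonempty S] (D : Dallajascar S) :
    D.MJword.count true = Fintype.card S ∧ D.MJword.length = 2 * Fintype.card S := by
  refine ⟨D.count_MJword true, ?_⟩
  rw [← List.count_true_add_count_false, D.count_MJword, D.count_MJword, two_mul]
end
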